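/- Let G ≤ Sym(M) be closed and locally oligomorphic on a countable set M, and fix a finite tuple ā ∈ Mⁿ. Let E = E₀ ⊆ E₁ ⊆ E₂ ⊆ ... be an increasing chain of finite G_E-invariant subsets of M, and let Aᵢ denote the G_{Eᵢ}-orbit of ā. Then there exists N ∈ ℕ such that Aᵢ = A_N for all i ≥ N. -/

import Mathlib

/-!
Put `S = E₀ ∪ ā` and `L = G_S`. Every `Aᵢ` is `L`-invariant: an element of `L` lies in `G_{E₀}`,
normalises `G_{Eᵢ}` because `Eᵢ` is `G_{E₀}`-invariant, and fixes `ā`. By local oligomorphicity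
`A₀` meets only finitely many `L`-orbits (the `G`-orbits of tuples `(S, b̄)`), so each `Aᵢ` is the
union of the orbits in a subset of one finite set, and a decreasing chain of such unions stabilizes.
-/

open Pointwise

/-- Topology of pointwise convergence on the symmetric group of a (discrete) set. -/
instance permTop (M : Type*) : TopologicalSpace (Equiv.Perm M) :=
  letI : TopologicalSpace M := ⊥
  TopologicalSpace.induced
    (fun g => ((fun x => g x, fun x => g.symm x) : (M → M) × (M → M))) inferInstance

/-- A topological group is Roelcke precompact if every open neighbourhood `U` of the identity
admits a finite set `E` with `G = U * E * U`. -/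
def RoelckePrecompact (G : Type*) [Group G] [TopologicalSpace G] : Prop :=
  ∀ U : Set G, IsOpen U → (1 : G) ∈ U →
    ∃ E : Finset G, ∀ x : G, ∃ u₁ ∈ U, ∃ e ∈ E, ∃ u₂ ∈ U, x = u₁ * e * u₂

/-- `Y` is a union of finitely many `G`-orbits. -/
def IsFinOrbitUnion {X : Type*} (G : Subgroup (Equiv.Perm X)) (Y : Set X) : Prop :=
  ∃ S : Finset X, Y = ⋃ a ∈ S, MulAction.orbit G a

/-- `G` acts oligomorphically on `Y`: finitely many orbits on `Yⁿ` for all `n`. -/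
def Oligo {X : Type*} (G : Subgroup (Equiv.Perm X)) (Y : Set X) : Prop :=
  ∀ n : ℕ, ∃ T : Finset (Fin n → X), ∀ f : Fin n → X, (∀ i, f i ∈ Y) →
    ∃ t ∈ T, ∃ g ∈ G, ∀ i, g (t i) = f i

/-- `G` is locally oligomorphic on `X`. -/
def LocallyOligo {X : Type*} (G : Subgroup (Equiv.Perm X)) : Prop :=
  ∀ Y : Set X, IsFinOrbitUnion G Y → Oligo G Y

/-- The pointwise stabilizer of `E` in `G ≤ Sym(M)`. -/
def ptStab {M : Type*} (G : Subgroup (Equiv.Perm M)) (E : Set M) : Subgroup (Equiv.Perm M) :=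
  G ⊓ ⨅ a ∈ E, MulAction.stabilizer (Equiv.Perm M) a

/-- The algebraic closure of `E`: the union of the finite orbits of the pointwise
stabilizer of `E` in `G`. -/
def acl {M : Type*} (G : Subgroup (Equiv.Perm M)) (E : Set M) : Set M :=
  {x | (MulAction.orbit (ptStab G E) x).Finite}

/-- The intersection of the open finite-index subgroups of a topological group. -/
def Gcirc (G : Type*) [Group G] [TopologicalSpace G] : Subgroup G :=
  ⨅ U ∈ {U : Subgroup G | IsOpen (U : Set G) ∧ U.index ≠ 0}, U

open MulAction

theorem orbit_subgroup_mono {α β : Type*} [Group α] [MulAction α β] {H K : Subgroup α}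
    (hHK : H ≤ K) (b : β) : orbit H b ⊆ orbit K b := by
  rintro _ ⟨⟨g, hg⟩, rfl⟩
  exact ⟨⟨g, hHK hg⟩, rfl⟩

theorem smul_mem_orbit_of_conj_mem {α β : Type*} [Group α] [MulAction α β] {K : Subgroup α}
    {g : α} (hg : ∀ h ∈ K, g * h * g⁻¹ ∈ K) {a b : β} (ha : g • a = a)
    (hb : b ∈ orbit K a) : g • b ∈ orbit K a := by
  obtain ⟨⟨h, hh⟩, rfl⟩ := hb
  refine ⟨⟨g * h * g⁻¹, hg h hh⟩, ?_⟩
  calc (g * h * g⁻¹) • a = (g * h * g⁻¹) • g • a := by rw [ha]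
    _ = g • h • a := by simp only [smul_smul, inv_mul_cancel_right]

theorem exists_eq_of_antitone_of_finite_orbit_cover {L β : Type*} [Group L] [MulAction L β]
    {R : Set β} (hR : R.Finite) {A : ℕ → Set β} (hA : Antitone A)
    (hcover : A 0 ⊆ ⋃ r ∈ R, orbit L r) (hsmul : ∀ i, ∀ g : L, ∀ b ∈ A i, g • b ∈ A i) :
    ∃ N, ∀ i ≥ N, A i = A N := by
  have : Finite R := hR.to_subtype
  set reps : ℕ → Set R := fun i => {r | (r : β) ∈ A i}
  have hunion : ∀ i, A i = ⋃ r ∈ reps i, orbit L (r : β) := by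
    intro i
    ext b
    simp only [Set.mem_iUnion, exists_prop]
    constructor
    · intro hb
      obtain ⟨r, hr, g, rfl⟩ := Set.mem_iUnion₂.1 (hcover (hA (Nat.zero_le i) hb))
      refine ⟨⟨r, hr⟩, ?_, mem_orbit r g⟩
      show r ∈ A i
      simpa only [inv_smul_smul] using hsmul i g⁻¹ _ hb
    · rintro ⟨r, hr, g, rfl⟩
      exact hsmul i g r hr
  obtain ⟨N, hN⟩ := WellFoundedLT.antitone_chain_condition (f := reps)
    fun i j hij r hr => hA hij hr
  exact ⟨N, fun i hi => by rw [hunion i, hunion N, hN i hi]⟩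

section ptStab

variable {M : Type*} (G : Subgroup (Equiv.Perm M))

theorem mem_ptStab_iff {F : Set M} {g : Equiv.Perm M} :
    g ∈ ptStab G F ↔ g ∈ G ∧ ∀ x ∈ F, g x = x := by
  simp [ptStab, Subgroup.mem_iInf, mem_stabilizer_iff, Equiv.Perm.smul_def]

theorem ptStab_anti {F F' : Set M} (h : F ⊆ F') : ptStab G F' ≤ ptStab G F :=
  inf_le_inf_left G (biInf_mono h)

theorem conj_mem_ptStab_of_invariant {E F : Set M} (hF : ∀ g ∈ ptStab G E, ∀ x ∈ F, g x ∈ F)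
    {g h : Equiv.Perm M} (hg : g ∈ ptStab G E) (hh : h ∈ ptStab G F) :
    g * h * g⁻¹ ∈ ptStab G F := by
  obtain ⟨hgG, -⟩ := (mem_ptStab_iff G).1 hg
  obtain ⟨hhG, hhF⟩ := (mem_ptStab_iff G).1 hh
  refine (mem_ptStab_iff G).2 ⟨G.mul_mem (G.mul_mem hgG hhG) (G.inv_mem hgG), fun x hx => ?_⟩
  have hx' : g⁻¹ x ∈ F := hF g⁻¹ ((ptStab G E).inv_mem hg) x hx
  rw [Equiv.Perm.mul_apply, Equiv.Perm.mul_apply, hhF _ hx', Equiv.Perm.coe_inv,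
    Equiv.apply_symm_apply]

theorem mem_ptStab_range_of_apply_append {k n : ℕ} {s : Fin k → M} {r b : Fin n → M}
    {g : Equiv.Perm M} (hg : g ∈ G) (hgrb : ∀ i, g (Fin.append s r i) = Fin.append s b i) :
    g ∈ ptStab G (Set.range s) ∧ g • r = b := by
  refine ⟨(mem_ptStab_iff G).2 ⟨hg, ?_⟩, funext fun j => ?_⟩
  · rintro _ ⟨j, rfl⟩
    simpa only [Fin.append_left] using hgrb (Fin.castAdd n j)
  · simpa only [Fin.append_right, Pi.smul_apply, Equiv.Perm.smul_def] using
      hgrb (Fin.natAdd k j)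

variable {G} in
theorem Oligo.exists_finite_orbit_cover_ptStab {Y : Set M} (hY : Oligo G Y) (S : Finset M)
    (hSY : (S : Set M) ⊆ Y) (n : ℕ) :
    ∃ R : Set (Fin n → M), R.Finite ∧
      ∀ b : Fin n → M, (∀ j, b j ∈ Y) → ∃ r ∈ R, b ∈ orbit (ptStab G S) r := by
  classical
  set s : Fin S.card → M := fun j => S.equivFin.symm j
  have hs : Set.range s = S := by
    ext x
    exact ⟨by rintro ⟨j, rfl⟩; exact (S.equivFin.symm j).2,
      fun hx => ⟨S.equivFin ⟨x, hx⟩, by simp [s]⟩⟩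
  obtain ⟨T, hT⟩ := hY (S.card + n)
  set P : (Fin (S.card + n) → M) → Prop :=
    fun t => ∃ b : Fin n → M, ∃ g ∈ G, ∀ i, g (t i) = Fin.append s b i
  choose rep g hgG hrep using fun t : T.filter P => (Finset.mem_filter.1 t.2).2
  refine ⟨Set.range rep, Set.finite_range rep, fun b hb => ?_⟩
  have hsbY : ∀ i, Fin.append s b i ∈ Y := Fin.addCases
    (fun j => by simpa only [Fin.append_left] using hSY (S.equivFin.symm j).2)
    (fun j => by simpa only [Fin.append_right] using hb j)
  obtain ⟨t, ht, g', hg', hg't⟩ := hT _ hsbY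
  set t' : T.filter P := ⟨t, Finset.mem_filter.2 ⟨ht, b, g', hg', hg't⟩⟩
  obtain ⟨hmem, hmap⟩ := mem_ptStab_range_of_apply_append G (r := rep t') (b := b)
    (G.mul_mem hg' (G.inv_mem (hgG t'))) fun i => by
      rw [← hrep t' i, Equiv.Perm.mul_apply, Equiv.Perm.coe_inv, Equiv.symm_apply_apply, hg't]
  rw [hs] at hmem
  exact ⟨rep t', Set.mem_range_self t', ⟨_, hmem⟩, hmap⟩

end ptStab

theorem orbit_chain_stabilizes_general {M : Type*} (G : Subgroup (Equiv.Perm M))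
    (holig : LocallyOligo G)
    {n : ℕ} (a : Fin n → M) (E : ℕ → Set M) (hfin : ∀ i, (E i).Finite)
    (hchain : ∀ i, E i ⊆ E (i + 1))
    (hinv : ∀ i, ∀ g ∈ ptStab G (E 0), ∀ x ∈ E i, g x ∈ E i) :
    ∃ N : ℕ, ∀ i ≥ N,
      MulAction.orbit (ptStab G (E i)) a = MulAction.orbit (ptStab G (E N)) a := by
  classical
  set S : Finset M := (hfin 0).toFinset ∪ Finset.univ.image a
  have hES : E 0 ⊆ S := fun x hx => by simp [S, hx]
  have haS : ∀ j, a j ∈ S := fun j => by simp [S]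
  obtain ⟨R, hRfin, hR⟩ := (holig _ ⟨S, rfl⟩).exists_finite_orbit_cover_ptStab S
    (fun x hx => Set.mem_biUnion hx (mem_orbit_self x)) n
  refine exists_eq_of_antitone_of_finite_orbit_cover (L := ptStab G S) hRfin
    (fun i j hij => orbit_subgroup_mono (ptStab_anti G (monotone_nat_of_le_succ hchain hij)) a)
    ?_ ?_
  · rintro _ ⟨⟨g, hg⟩, rfl⟩
    obtain ⟨r, hr, hbr⟩ := hR ((⟨g, hg⟩ : ptStab G (E 0)) • a)
      fun j => Set.mem_biUnion (haS j) ⟨⟨g, ((mem_ptStab_iff G).1 hg).1⟩, rfl⟩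
    exact Set.mem_biUnion hr hbr
  · rintro i ⟨g, hg⟩ b hb
    have hgE : g ∈ ptStab G (E 0) := ptStab_anti G hES hg
    exact smul_mem_orbit_of_conj_mem
      (fun h hh => conj_mem_ptStab_of_invariant G (hinv i) hgE hh)
      (funext fun j => ((mem_ptStab_iff G).1 hg).2 _ (haS j)) hb

/-- For an increasing chain `E₀ ⊆ E₁ ⊆ ⋯` of finite `G_{E₀}`-invariant sets, the chain of
orbits of a fixed tuple under the pointwise stabilizers `G_{Eᵢ}` stabilizes. -/
theorem orbit_chain_stabilizes {M : Type*} [Countable M] (G : Subgroup (Equiv.Perm M))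
    (hclosed : IsClosed (G : Set (Equiv.Perm M))) (holig : LocallyOligo G)
    {n : ℕ} (a : Fin n → M) (E : ℕ → Set M) (hfin : ∀ i, (E i).Finite)
    (hchain : ∀ i, E i ⊆ E (i + 1))
    (hinv : ∀ i, ∀ g ∈ ptStab G (E 0), ∀ x ∈ E i, g x ∈ E i) :
    ∃ N : ℕ, ∀ i ≥ N,
      MulAction.orbit (ptStab G (E i)) a = MulAction.orbit (ptStab G (E N)) a :=
  orbit_chain_stabilizes_general G holig a E hfin hchain hinv
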